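/- Let (w, A) be a solution of the Bartnik–McKinnon ODE system (2a)–(2b) on (0, ∞) with regularity conditions w(0⁺) = 1, w'(0⁺) = 0, A(0⁺) = 1, such that A(r) > 0, −1 < w(r) < 1 and w'(r) < 0 for all r > 0, and w(r) → −1, w'(r) → 0, A(r) → 1 as r → ∞. Then there exists a positive, continuously differentiable function T : (0, ∞) → ℝ solving equation (2c): 2rA(r)T'(r) + (2w'(r)²A(r) + Φ(r)/r)T(r) = 0, and satisfying T(r) → 1 as r → ∞ and T'(r) → 0 as r → 0⁺. In particular the full metric ds² = −T⁻²dt² + A⁻¹dr² + r²(dθ² + sin²θ dφ²) is asymptotically flat: (A(r), T(r)) → (1, 1) as r → ∞. -/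

import Mathlib

/-!
By (2b), `Φ / r = r A' + 2 w'² A`, so (2c) is the linear equation
`(log T)' = -2 w'² / r - A' / (2 A)`, solved by `T = exp (∫_r^∞ 2 w'² / s ds) / √A`.
What has to be proved is that `w'² / r` is integrable on `(0, ∞)` and that `T' → 0` at `0⁺`,
i.e. `w'² / r → 0` and `A' → 0`.

At infinity `w'² ≤ -w'` once `|w'| ≤ 1`, and `∫ (-w') < ∞` since `w` has a limit.
At the origin the regularity conditions give no rates, which come from three monotone
quantities vanishing at `0⁺`: the mass `r (1 - A)` (so `A ≤ 1`),
`2 r (1 - w) + r² A w'` (so `r A (-w') ≤ 2 (1 - w)`), and, where `A` and `w` are close to `1`,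
`r (-w') - p (1 - w)` for `p = 7/4`. The last makes `(1 - w) / r ^ p` nondecreasing, so
`1 - w = O(r ^ p)` and `w' = O(r ^ (p - 1))`; any `p ∈ (3/2, 2)` works, `p > 3/2` being what
makes `w'² / r` and `(1 - w²)² / r³` tend to `0`. L'Hôpital then gives `(1 - A) / r → 0`,
and (2b) gives `A' → 0`.
-/

open Set Filter Topology

/-- The function `Φ(r) = r(1 - A(r)) - (1 - w(r)²)²/r` from the
Bartnik–McKinnon system. -/
noncomputable def Phi (w A : ℝ → ℝ) (r : ℝ) : ℝ :=
  r * (1 - A r) - (1 - (w r) ^ 2) ^ 2 / r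

/-- `(w, A)` solves the Bartnik–McKinnon ODE system (2a)–(2b) on the set `s`:
`w` is C², `A` is C¹, and the equations
(2a) `r²·A·w'' + Φ·w' + w(1 - w²) = 0` and
(2b) `r·A' + (1 + 2w'²)·A = 1 - (1 - w²)²/r²`
hold on `s`. -/
def IsBMSolutionOn (w A : ℝ → ℝ) (s : Set ℝ) : Prop :=
  ContDiffOn ℝ 2 w s ∧ ContDiffOn ℝ 1 A s ∧
  (∀ r ∈ s, r ^ 2 * A r * deriv (deriv w) r + Phi w A r * deriv w r
      + w r * (1 - (w r) ^ 2) = 0) ∧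
  (∀ r ∈ s, r * deriv A r + (1 + 2 * (deriv w r) ^ 2) * A r
      = 1 - (1 - (w r) ^ 2) ^ 2 / r ^ 2)

/-- The regularity conditions at the origin:
`w(0⁺) = 1`, `w'(0⁺) = 0`, `A(0⁺) = 1`. -/
def RegularAtOrigin (w A : ℝ → ℝ) : Prop :=
  Tendsto w (𝓝[>] (0 : ℝ)) (𝓝 1) ∧
  Tendsto (deriv w) (𝓝[>] (0 : ℝ)) (𝓝 0) ∧
  Tendsto A (𝓝[>] (0 : ℝ)) (𝓝 1)

/-- The condition `w''(0⁺) = -λ`. -/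
def SecondDerivAtOrigin (w : ℝ → ℝ) (lam : ℝ) : Prop :=
  Tendsto (deriv (deriv w)) (𝓝[>] (0 : ℝ)) (𝓝 (-lam))

open MeasureTheory

theorem monotoneOn_Ioc_of_hasDerivAt_nonneg {f f' : ℝ → ℝ} {a b : ℝ}
    (hf : ∀ x ∈ Ioc a b, HasDerivAt f (f' x) x) (hf' : ∀ x ∈ Ioc a b, 0 ≤ f' x) :
    MonotoneOn f (Ioc a b) := by
  refine monotoneOn_of_hasDerivWithinAt_nonneg (f' := f') (convex_Ioc a b)
    (fun x hx => (hf x hx).continuousAt.continuousWithinAt) (fun x hx => ?_) (fun x hx => ?_)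
  all_goals rw [interior_Ioc] at hx
  exacts [(hf x (Ioo_subset_Ioc_self hx)).hasDerivWithinAt, hf' x (Ioo_subset_Ioc_self hx)]

theorem le_of_tendsto_nhdsGT_of_hasDerivAt_nonneg {f f' : ℝ → ℝ} {a b l x : ℝ}
    (hf : ∀ x ∈ Ioc a b, HasDerivAt f (f' x) x) (hf' : ∀ x ∈ Ioc a b, 0 ≤ f' x)
    (hl : Tendsto f (𝓝[>] a) (𝓝 l)) (hx : x ∈ Ioc a b) : l ≤ f x := by
  refine le_of_tendsto hl ?_
  filter_upwards [Ioo_mem_nhdsGT hx.1] with y hy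
  exact monotoneOn_Ioc_of_hasDerivAt_nonneg hf hf' ⟨hy.1, hy.2.le.trans hx.2⟩ hx hy.2.le

theorem le_div_rpow_mul_rpow_of_mul_le_mul_deriv {u u' : ℝ → ℝ} {p δ x : ℝ}
    (hu : ∀ x ∈ Ioc 0 δ, HasDerivAt u (u' x) x) (h : ∀ x ∈ Ioc 0 δ, p * u x ≤ x * u' x)
    (hx : x ∈ Ioc 0 δ) : u x ≤ u δ / δ ^ p * x ^ p := by
  have hδ : δ ∈ Ioc 0 δ := ⟨hx.1.trans_le hx.2, le_rfl⟩
  have hderiv : ∀ y ∈ Ioc 0 δ, HasDerivAt (fun y => u y * y ^ (-p))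
      (u' y * y ^ (-p) + u y * (-p * y ^ (-p - 1))) y := fun y hy =>
    (hu y hy).mul (Real.hasDerivAt_rpow_const (Or.inl hy.1.ne'))
  have hmono := monotoneOn_Ioc_of_hasDerivAt_nonneg hderiv fun y hy => by
    have hy0 := hy.1
    have : u' y * y ^ (-p) + u y * (-p * y ^ (-p - 1)) = y ^ (-p - 1) * (y * u' y - p * u y) := by
      rw [Real.rpow_sub_one hy0.ne']
      field_simp
      ring
    rw [this]
    exact mul_nonneg (Real.rpow_nonneg hy0.le _) (sub_nonneg.2 (h y hy))
  have := mul_le_mul_of_nonneg_right (hmono hx hδ hx.2) (Real.rpow_nonneg hx.1.le p)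
  dsimp only at this
  rwa [mul_assoc, ← Real.rpow_add hx.1, neg_add_cancel, Real.rpow_zero, mul_one,
    Real.rpow_neg hδ.1.le, ← div_eq_mul_inv] at this

theorem tendsto_rpow_sq_div_pow_three {p : ℝ} (hp : 3 / 2 < p) :
    Tendsto (fun x : ℝ => (x ^ p) ^ 2 / x ^ 3) (𝓝[>] 0) (𝓝 0) := by
  have h : Tendsto (fun x : ℝ => x ^ (2 * p - 3)) (𝓝[>] 0) (𝓝 0) := by
    have := (Real.continuousAt_rpow_const 0 (2 * p - 3) (Or.inr (by linarith))).tendsto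
    rw [Real.zero_rpow (by linarith)] at this
    exact this.mono_left nhdsWithin_le_nhds
  refine h.congr' ?_
  filter_upwards [self_mem_nhdsWithin] with x (hx : 0 < x)
  rw [Real.rpow_sub hx, ← Real.rpow_natCast, ← Real.rpow_natCast, ← Real.rpow_mul hx.le,
    mul_comm]
  norm_num

theorem integrableOn_Ioc_of_tendsto_nhdsGT {g : ℝ → ℝ} {a b l : ℝ}
    (hg : ContinuousOn g (Ioc a b)) (hl : Tendsto g (𝓝[>] a) (𝓝 l)) :
    IntegrableOn g (Ioc a b) := by
  classical
  obtain hba | hab := lt_or_ge b a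
  · simp [Ioc_eq_empty_of_le hba.le]
  have hcont : ContinuousOn (Function.update g a l) (Icc a b) := by
    rw [← Ioc_insert_left hab]
    intro x hx
    rcases eq_or_ne x a with rfl | hxa
    · rw [continuousWithinAt_update_same]
      exact hl.mono_left (nhdsWithin_mono _ (by simp [Ioc_subset_Ioi_self]))
    · rw [continuousWithinAt_update_of_ne hxa, continuousWithinAt_insert]
      exact hg x (hx.resolve_left hxa)
  refine (hcont.integrableOn_Icc.mono_set Ioc_subset_Icc_self).congr_fun
    (fun x hx => Function.update_of_ne hx.1.ne' _ _) measurableSet_Ioc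

theorem hasDerivAt_integral_Ioi {g : ℝ → ℝ} {a x : ℝ} (hg : IntegrableOn g (Ioi a))
    (hcont : ContinuousOn g (Ioi a)) (hx : a < x) :
    HasDerivAt (fun y => ∫ t in Ioi y, g t) (-g x) x := by
  have hsplit : (fun y => (∫ t in Ioi a, g t) - ∫ t in a..y, g t) =ᶠ[𝓝 x]
      fun y => ∫ t in Ioi y, g t := by
    filter_upwards [Ioi_mem_nhds hx] with y hy
    rw [← intervalIntegral.integral_Ioi_sub_Ioi hg hy.le, sub_sub_cancel]
  refine HasDerivAt.congr_of_eventuallyEq ?_ hsplit.symm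
  simpa using (intervalIntegral.integral_hasDerivAt_right
    ((intervalIntegrable_iff_integrableOn_Ioc_of_le hx.le).2 (hg.mono_set Ioc_subset_Ioi_self))
    (hcont.stronglyMeasurableAtFilter isOpen_Ioi x hx)
    (hcont.continuousAt (Ioi_mem_nhds hx))).const_sub (∫ t in Ioi a, g t)

theorem contDiffOn_one_of_hasDerivAt {f f' : ℝ → ℝ} {s : Set ℝ} (hs : IsOpen s)
    (hf : ∀ x ∈ s, HasDerivAt f (f' x) x) (hf' : ContinuousOn f' s) : ContDiffOn ℝ 1 f s := by
  rw [show (1 : WithTop ℕ∞) = 0 + 1 from rfl, contDiffOn_succ_iff_deriv_of_isOpen hs,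
    contDiffOn_zero]
  refine ⟨fun x hx => (hf x hx).differentiableAt.differentiableWithinAt, by simp, ?_⟩
  exact hf'.congr fun x hx => (hf x hx).deriv

theorem tendsto_mass_nhdsGT_zero {A : ℝ → ℝ} (hA0 : Tendsto A (𝓝[>] 0) (𝓝 1)) :
    Tendsto (fun s => s * (1 - A s)) (𝓝[>] 0) (𝓝 0) := by
  simpa using (tendsto_id.mono_left nhdsWithin_le_nhds).mul (hA0.const_sub 1)

namespace IsBMSolutionOn

variable {w A : ℝ → ℝ} {r : ℝ}

theorem hasDerivAt_w (h : IsBMSolutionOn w A (Ioi 0)) (hr : 0 < r) :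
    HasDerivAt w (deriv w r) r :=
  ((h.1.differentiableOn (by norm_num)).differentiableAt (Ioi_mem_nhds hr)).hasDerivAt

theorem continuousOn_deriv_w (h : IsBMSolutionOn w A (Ioi 0)) :
    ContinuousOn (deriv w) (Ioi 0) :=
  (h.1.deriv_of_isOpen isOpen_Ioi (m := 1) (by norm_num)).continuousOn

theorem hasDerivAt_deriv_w (h : IsBMSolutionOn w A (Ioi 0)) (hr : 0 < r) :
    HasDerivAt (deriv w) (deriv (deriv w) r) r :=
  (((h.1.deriv_of_isOpen isOpen_Ioi (m := 1) (by norm_num)).differentiableOn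
    one_ne_zero).differentiableAt (Ioi_mem_nhds hr)).hasDerivAt

theorem hasDerivAt_A (h : IsBMSolutionOn w A (Ioi 0)) (hr : 0 < r) :
    HasDerivAt A (deriv A r) r :=
  ((h.2.1.differentiableOn one_ne_zero).differentiableAt (Ioi_mem_nhds hr)).hasDerivAt

theorem yangMills_mul_self (h : IsBMSolutionOn w A (Ioi 0)) (hr : 0 < r) :
    r ^ 3 * A r * deriv (deriv w) r + (r ^ 2 * (1 - A r) - (1 - w r ^ 2) ^ 2) * deriv w r
      + r * w r * (1 - w r ^ 2) = 0 := by
  have e := h.2.2.1 r hr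
  simp only [Phi] at e
  field_simp at e
  linear_combination e

theorem einstein_mul_sq (h : IsBMSolutionOn w A (Ioi 0)) (hr : 0 < r) :
    r ^ 3 * deriv A r + r ^ 2 * (1 + 2 * deriv w r ^ 2) * A r = r ^ 2 - (1 - w r ^ 2) ^ 2 := by
  have e := h.2.2.2 r hr
  field_simp at e
  linear_combination e

theorem hasDerivAt_mass (h : IsBMSolutionOn w A (Ioi 0)) (hr : 0 < r) :
    HasDerivAt (fun s => s * (1 - A s))
      ((1 - w r ^ 2) ^ 2 / r ^ 2 + 2 * deriv w r ^ 2 * A r) r := by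
  refine ((hasDerivAt_id r).mul ((hasDerivAt_const r 1).sub (h.hasDerivAt_A hr))).congr_deriv ?_
  simp only [id, Pi.sub_apply]
  field_simp
  linear_combination -(h.einstein_mul_sq hr)

theorem A_le_one (h : IsBMSolutionOn w A (Ioi 0)) (hA0 : Tendsto A (𝓝[>] 0) (𝓝 1))
    (hA : ∀ s, 0 < s → 0 ≤ A s) (hr : 0 < r) : A r ≤ 1 := by
  have := le_of_tendsto_nhdsGT_of_hasDerivAt_nonneg (fun s hs => h.hasDerivAt_mass hs.1)
    (fun s hs => by have := hA s hs.1; positivity) (tendsto_mass_nhdsGT_zero hA0) ⟨hr, le_rfl⟩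
  nlinarith

theorem mul_mul_neg_deriv_le (h : IsBMSolutionOn w A (Ioi 0)) (hreg : RegularAtOrigin w A)
    (horbit : ∀ s, 0 < s → 0 < A s ∧ -1 < w s ∧ w s < 1 ∧ deriv w s < 0) (hr : 0 < r) :
    r * A r * -deriv w r ≤ 2 * (1 - w r) := by
  obtain ⟨hw0, hw'0, hA0⟩ := hreg
  have hV : ∀ s ∈ Ioc 0 r, HasDerivAt (fun s => 2 * s * (1 - w s) + s ^ 2 * A s * deriv w s)
      ((1 - w s) ^ 2 * (2 + w s) + 2 * s * -deriv w s * (1 - A s + A s * deriv w s ^ 2)) s := by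
    intro s hs
    have hd := (((hasDerivAt_id s).const_mul 2).mul
      ((hasDerivAt_const s 1).sub (h.hasDerivAt_w hs.1))).add
      (((hasDerivAt_pow 2 s).mul (h.hasDerivAt_A hs.1)).mul (h.hasDerivAt_deriv_w hs.1))
    refine hd.congr_deriv (mul_left_cancel₀ hs.1.ne' ?_)
    simp only [id, Pi.sub_apply, Pi.mul_apply]
    linear_combination h.yangMills_mul_self hs.1 + deriv w s * h.einstein_mul_sq hs.1
  have hV' : ∀ s ∈ Ioc 0 r,
      0 ≤ (1 - w s) ^ 2 * (2 + w s) + 2 * s * -deriv w s * (1 - A s + A s * deriv w s ^ 2) := by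
    intro s hs
    obtain ⟨hA, hw, -, hw'⟩ := horbit s hs.1
    have hs0 := hs.1
    have h2w : 0 ≤ 2 + w s := by linarith
    have h1A : 0 ≤ 1 - A s := sub_nonneg.2 (h.A_le_one hA0 (fun t ht => (horbit t ht).1.le) hs0)
    have hq : 0 ≤ -deriv w s := by linarith
    positivity
  have hV0 : Tendsto (fun s => 2 * s * (1 - w s) + s ^ 2 * A s * deriv w s) (𝓝[>] 0) (𝓝 0) := by
    have hid : Tendsto (fun s : ℝ => s) (𝓝[>] 0) (𝓝 0) :=
      tendsto_id.mono_left nhdsWithin_le_nhds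
    simpa using ((hid.const_mul 2).mul (hw0.const_sub 1)).add (((hid.pow 2).mul hA0).mul hw'0)
  have := le_of_tendsto_nhdsGT_of_hasDerivAt_nonneg hV hV' hV0 ⟨hr, le_rfl⟩
  nlinarith

theorem seven_fourths_mul_le (h : IsBMSolutionOn w A (Ioi 0)) (hreg : RegularAtOrigin w A)
    (horbit : ∀ s, 0 < s → 0 < A s ∧ -1 < w s ∧ w s < 1 ∧ deriv w s < 0) {δ : ℝ}
    (hδ : ∀ s ∈ Ioc 0 δ, 19 / 20 ≤ A s ∧ 19 / 20 ≤ w s) (hr : r ∈ Ioc 0 δ) :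
    7 / 4 * (1 - w r) ≤ r * -deriv w r := by
  have hZ : ∀ s ∈ Ioc 0 δ, HasDerivAt (fun s => s * -deriv w s - 7 / 4 * (1 - w s))
      (-deriv w s - s * deriv (deriv w) s - 7 / 4 * -deriv w s) s := by
    intro s hs
    refine (((hasDerivAt_id s).mul (h.hasDerivAt_deriv_w hs.1).neg).sub
      (((hasDerivAt_const s 1).sub (h.hasDerivAt_w hs.1)).const_mul (7 / 4))).congr_deriv ?_
    simp only [id, Pi.neg_apply]
    ring
  have hZ' : ∀ s ∈ Ioc 0 δ, 0 ≤ -deriv w s - s * deriv (deriv w) s - 7 / 4 * -deriv w s := by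
    intro s hs
    obtain ⟨hA, hw, hw1, hw'⟩ := horbit s hs.1
    obtain ⟨hA20, hw20⟩ := hδ s hs
    have hs0 := hs.1
    have hA1 := h.A_le_one hreg.2.2 (fun t ht => (horbit t ht).1.le) hs0
    set X := s * -deriv w s
    set u := 1 - w s
    have hX : 0 ≤ X := by positivity [show 0 ≤ -deriv w s by linarith]
    have hAX : A s * X ≤ 2 * u := by
      have := h.mul_mul_neg_deriv_le hreg horbit hs0
      linarith [show s * A s * -deriv w s = A s * X by ring]
    have hXu : X ≤ 40 / 19 * u := by nlinarith
    have h1A : (1 - A s) * X ≤ 1 / 20 * X := by nlinarith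
    have hwu : 741 / 400 * u ≤ w s * (1 + w s) * u := by
      nlinarith [mul_nonneg (show 0 ≤ u by linarith) (show 0 ≤ w s - 19 / 20 by linarith)]
    -- `19 / 20` is close enough to `1` for `w (1 + w) - 2 (1 - A) / A ≥ 2 (7/4 - 1)`
    have hbracket : 0 ≤ -(3 / 4) * (A s * X) - (1 - A s) * X + w s * (1 + w s) * u := by
      linarith
    have key : s ^ 2 * A s * (-deriv w s - s * deriv (deriv w) s - 7 / 4 * -deriv w s)
        = s * (-(3 / 4) * (A s * X) - (1 - A s) * X + w s * (1 + w s) * u)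
          + (1 - w s ^ 2) ^ 2 * -deriv w s := by
      simp only [X, u]
      linear_combination -(h.yangMills_mul_self hs0)
    have : 0 ≤ s ^ 2 * A s * (-deriv w s - s * deriv (deriv w) s - 7 / 4 * -deriv w s) := by
      rw [key]
      have : 0 ≤ -deriv w s := by linarith
      positivity
    exact nonneg_of_mul_nonneg_right this (by positivity)
  have hZ0 : Tendsto (fun s => s * -deriv w s - 7 / 4 * (1 - w s)) (𝓝[>] 0) (𝓝 0) := by
    simpa using ((tendsto_id.mono_left nhdsWithin_le_nhds).mul hreg.2.1.neg).sub
      ((hreg.1.const_sub 1).const_mul (7 / 4))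
  have := le_of_tendsto_nhdsGT_of_hasDerivAt_nonneg hZ hZ' hZ0 hr
  linarith

theorem exists_rate_nhdsGT_zero (h : IsBMSolutionOn w A (Ioi 0)) (hreg : RegularAtOrigin w A)
    (horbit : ∀ s, 0 < s → 0 < A s ∧ -1 < w s ∧ w s < 1 ∧ deriv w s < 0) :
    ∃ C, ∀ᶠ r in 𝓝[>] 0,
      1 - w r ≤ C * r ^ (7 / 4 : ℝ) ∧ -deriv w r ≤ C * r ^ (7 / 4 : ℝ) / r := by
  obtain ⟨δ, hδ0, hδ⟩ := mem_nhdsGT_iff_exists_Ioc_subset.1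
    ((hreg.2.2.eventually (Ici_mem_nhds (by norm_num : (19 / 20 : ℝ) < 1))).and
      (hreg.1.eventually (Ici_mem_nhds (by norm_num : (19 / 20 : ℝ) < 1))))
  set C := (1 - w δ) / δ ^ (7 / 4 : ℝ)
  have hC : 0 ≤ C := div_nonneg (by linarith [(horbit δ hδ0).2.2.1])
    (Real.rpow_nonneg (le_of_lt hδ0) _)
  refine ⟨40 / 19 * C, ?_⟩
  filter_upwards [Ioc_mem_nhdsGT hδ0] with r hr
  have hu : 1 - w r ≤ C * r ^ (7 / 4 : ℝ) :=
    le_div_rpow_mul_rpow_of_mul_le_mul_deriv (u := fun s => 1 - w s)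
      (fun s hs => ((hasDerivAt_const s 1).sub (h.hasDerivAt_w hs.1)).congr_deriv (zero_sub _))
      (fun s hs => h.seven_fourths_mul_le hreg horbit (fun t ht => hδ ht) hs) hr
  have hCr : 0 ≤ C * r ^ (7 / 4 : ℝ) := mul_nonneg hC (by have := hr.1; positivity)
  have hA : 19 / 20 ≤ A r := (hδ hr).1
  have hq : 0 ≤ -deriv w r := by linarith [(horbit r hr.1).2.2.2]
  have hV := h.mul_mul_neg_deriv_le hreg horbit hr.1
  refine ⟨by linarith, ?_⟩
  rw [le_div_iff₀ hr.1]
  nlinarith [mul_nonneg hr.1.le hq]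

theorem tendsto_sq_deriv_div_nhdsGT_zero (h : IsBMSolutionOn w A (Ioi 0))
    (hreg : RegularAtOrigin w A)
    (horbit : ∀ s, 0 < s → 0 < A s ∧ -1 < w s ∧ w s < 1 ∧ deriv w s < 0) :
    Tendsto (fun r => deriv w r ^ 2 / r) (𝓝[>] 0) (𝓝 0) := by
  obtain ⟨C, hC⟩ := h.exists_rate_nhdsGT_zero hreg horbit
  have hlim := (tendsto_rpow_sq_div_pow_three (p := 7 / 4) (by norm_num)).const_mul (C ^ 2)
  rw [mul_zero] at hlim
  refine squeeze_zero' ?_ ?_ hlim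
  · filter_upwards [self_mem_nhdsWithin] with r (hr : 0 < r)
    positivity
  · filter_upwards [hC, self_mem_nhdsWithin] with r hr (hr0 : 0 < r)
    have hq : 0 ≤ -deriv w r := by linarith [(horbit r hr0).2.2.2]
    calc deriv w r ^ 2 / r = (-deriv w r) ^ 2 / r := by ring
      _ ≤ (C * r ^ (7 / 4 : ℝ) / r) ^ 2 / r := by gcongr; exact hr.2
      _ = C ^ 2 * ((r ^ (7 / 4 : ℝ)) ^ 2 / r ^ 3) := by field_simp

theorem tendsto_one_sub_sq_sq_div_pow_three (h : IsBMSolutionOn w A (Ioi 0))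
    (hreg : RegularAtOrigin w A)
    (horbit : ∀ s, 0 < s → 0 < A s ∧ -1 < w s ∧ w s < 1 ∧ deriv w s < 0) :
    Tendsto (fun r => (1 - w r ^ 2) ^ 2 / r ^ 3) (𝓝[>] 0) (𝓝 0) := by
  obtain ⟨C, hC⟩ := h.exists_rate_nhdsGT_zero hreg horbit
  have hlim := (tendsto_rpow_sq_div_pow_three (p := 7 / 4) (by norm_num)).const_mul (4 * C ^ 2)
  rw [mul_zero] at hlim
  refine squeeze_zero' ?_ ?_ hlim
  · filter_upwards [self_mem_nhdsWithin] with r (hr : 0 < r)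
    positivity
  · filter_upwards [hC, self_mem_nhdsWithin] with r hr (hr0 : 0 < r)
    obtain ⟨-, hw, hw1, -⟩ := horbit r hr0
    have h0 : 0 ≤ 1 - w r ^ 2 := by nlinarith
    calc (1 - w r ^ 2) ^ 2 / r ^ 3 ≤ (2 * (C * r ^ (7 / 4 : ℝ))) ^ 2 / r ^ 3 := by
          gcongr; nlinarith [hr.1]
      _ = 4 * C ^ 2 * ((r ^ (7 / 4 : ℝ)) ^ 2 / r ^ 3) := by ring

theorem tendsto_one_sub_A_div_nhdsGT_zero (h : IsBMSolutionOn w A (Ioi 0))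
    (hreg : RegularAtOrigin w A)
    (horbit : ∀ s, 0 < s → 0 < A s ∧ -1 < w s ∧ w s < 1 ∧ deriv w s < 0) :
    Tendsto (fun r => (1 - A r) / r) (𝓝[>] 0) (𝓝 0) := by
  have hlim : Tendsto (fun r => ((1 - w r ^ 2) ^ 2 / r ^ 2 + 2 * deriv w r ^ 2 * A r) / (2 * r))
      (𝓝[>] 0) (𝓝 0) := by
    have := ((h.tendsto_one_sub_sq_sq_div_pow_three hreg horbit).const_mul (1 / 2)).add
      ((h.tendsto_sq_deriv_div_nhdsGT_zero hreg horbit).mul hreg.2.2)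
    rw [mul_zero, zero_mul, add_zero] at this
    refine this.congr' ?_
    filter_upwards [self_mem_nhdsWithin] with r (hr : 0 < r)
    field_simp
  have hsq : ∀ r : ℝ, HasDerivAt (fun s => s ^ 2) (2 * r) r := fun r => by
    simpa using hasDerivAt_pow 2 r
  refine (HasDerivAt.lhopital_zero_nhdsGT
    (eventually_nhdsWithin_of_forall fun r (hr : 0 < r) => h.hasDerivAt_mass hr)
    (Eventually.of_forall hsq)
    (eventually_nhdsWithin_of_forall fun r (hr : 0 < r) => by positivity)
    (tendsto_mass_nhdsGT_zero hreg.2.2)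
    (by simpa using ((continuous_pow 2).tendsto (0 : ℝ)).mono_left nhdsWithin_le_nhds)
    hlim).congr' ?_
  filter_upwards [self_mem_nhdsWithin] with r (hr : 0 < r)
  field_simp

theorem tendsto_deriv_A_nhdsGT_zero (h : IsBMSolutionOn w A (Ioi 0))
    (hreg : RegularAtOrigin w A)
    (horbit : ∀ s, 0 < s → 0 < A s ∧ -1 < w s ∧ w s < 1 ∧ deriv w s < 0) :
    Tendsto (deriv A) (𝓝[>] 0) (𝓝 0) := by
  have := ((h.tendsto_one_sub_A_div_nhdsGT_zero hreg horbit).sub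
    ((hreg.2.2.const_mul 2).mul (h.tendsto_sq_deriv_div_nhdsGT_zero hreg horbit))).sub
    (h.tendsto_one_sub_sq_sq_div_pow_three hreg horbit)
  rw [mul_zero, sub_zero, sub_zero] at this
  refine this.congr' ?_
  filter_upwards [self_mem_nhdsWithin] with r (hr : 0 < r)
  field_simp
  linear_combination -(h.einstein_mul_sq hr)

theorem continuousOn_two_mul_sq_deriv_div (h : IsBMSolutionOn w A (Ioi 0)) :
    ContinuousOn (fun r => 2 * deriv w r ^ 2 / r) (Ioi 0) :=
  (continuousOn_const.mul (h.continuousOn_deriv_w.pow 2)).div continuousOn_id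
    fun _ hr => ne_of_gt hr

theorem integrableOn_two_mul_sq_deriv_div (h : IsBMSolutionOn w A (Ioi 0))
    (hreg : RegularAtOrigin w A)
    (horbit : ∀ s, 0 < s → 0 < A s ∧ -1 < w s ∧ w s < 1 ∧ deriv w s < 0)
    (hw : Tendsto w atTop (𝓝 (-1))) (hw' : Tendsto (deriv w) atTop (𝓝 0)) :
    IntegrableOn (fun r => 2 * deriv w r ^ 2 / r) (Ioi 0) := by
  have hcont := h.continuousOn_two_mul_sq_deriv_div
  obtain ⟨N, hN⟩ :=
    eventually_atTop.1 (hw'.eventually (Ici_mem_nhds (by norm_num : (-1 : ℝ) < 0)))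
  have hN1 : (0 : ℝ) < max N 1 := by positivity
  rw [← Ioc_union_Ioi_eq_Ioi hN1.le]
  refine IntegrableOn.union ?_ ?_
  · refine integrableOn_Ioc_of_tendsto_nhdsGT (l := 0) (hcont.mono Ioc_subset_Ioi_self) ?_
    simpa [mul_div_assoc] using (h.tendsto_sq_deriv_div_nhdsGT_zero hreg horbit).const_mul 2
  have hq : IntegrableOn (fun r => -deriv w r) (Ioi (max N 1)) :=
    integrableOn_Ioi_deriv_of_nonneg (g := fun r => -w r)
      (h.hasDerivAt_w hN1).neg.continuousAt.continuousWithinAt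
      (fun r hr => (h.hasDerivAt_w (hN1.trans hr)).neg)
      (fun r hr => by linarith [(horbit r (hN1.trans hr)).2.2.2]) hw.neg
  refine (hq.const_mul 2).mono' ((hcont.mono fun r hr => hN1.trans hr).aestronglyMeasurable
    measurableSet_Ioi) ?_
  filter_upwards [ae_restrict_mem measurableSet_Ioi] with r (hr : max N 1 < r)
  have hr1 : 1 ≤ r := (le_max_right N 1).trans hr.le
  have hq1 : -1 ≤ deriv w r := hN r ((le_max_left N 1).trans hr.le)
  have hq0 := (horbit r (hN1.trans hr)).2.2.2
  rw [Real.norm_of_nonneg (by positivity), div_le_iff₀ (by positivity)]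
  nlinarith

end IsBMSolutionOn

noncomputable def metricT (w A : ℝ → ℝ) (r : ℝ) : ℝ :=
  Real.exp (∫ s in Ioi r, 2 * deriv w s ^ 2 / s) / Real.sqrt (A r)

section metricT

variable {w A : ℝ → ℝ} {r : ℝ}

theorem metricT_pos (hA : 0 < A r) : 0 < metricT w A r :=
  div_pos (Real.exp_pos _) (Real.sqrt_pos.2 hA)

theorem hasDerivAt_metricT (h : IsBMSolutionOn w A (Ioi 0))
    (hint : IntegrableOn (fun s => 2 * deriv w s ^ 2 / s) (Ioi 0)) (hA : 0 < A r) (hr : 0 < r) :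
    HasDerivAt (metricT w A)
      (metricT w A r * (-(2 * deriv w r ^ 2 / r) - deriv A r / (2 * A r))) r := by
  have hsqrt := Real.sqrt_pos.2 hA
  refine ((hasDerivAt_integral_Ioi hint h.continuousOn_two_mul_sq_deriv_div hr).exp.div
    ((h.hasDerivAt_A hr).sqrt hA.ne') hsqrt.ne').congr_deriv ?_
  unfold metricT
  field_simp
  rw [Real.sq_sqrt hA.le]
  ring

theorem contDiffOn_metricT (h : IsBMSolutionOn w A (Ioi 0))
    (hint : IntegrableOn (fun s => 2 * deriv w s ^ 2 / s) (Ioi 0)) (hA : ∀ s, 0 < s → 0 < A s) :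
    ContDiffOn ℝ 1 (metricT w A) (Ioi 0) :=
  ((contDiffOn_one_of_hasDerivAt isOpen_Ioi
    (fun _ hs => hasDerivAt_integral_Ioi hint h.continuousOn_two_mul_sq_deriv_div hs)
    h.continuousOn_two_mul_sq_deriv_div.neg).exp).div
    (h.2.1.sqrt fun s hs => (hA s hs).ne') fun s hs => (Real.sqrt_pos.2 (hA s hs)).ne'

theorem metricT_ode (h : IsBMSolutionOn w A (Ioi 0))
    (hint : IntegrableOn (fun s => 2 * deriv w s ^ 2 / s) (Ioi 0)) (hA : 0 < A r) (hr : 0 < r) :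
    2 * r * A r * deriv (metricT w A) r
      + (2 * deriv w r ^ 2 * A r + Phi w A r / r) * metricT w A r = 0 := by
  rw [(hasDerivAt_metricT h hint hA hr).deriv]
  unfold Phi
  field_simp
  linear_combination (-metricT w A r) * h.einstein_mul_sq hr

theorem tendsto_metricT_atTop (hA : Tendsto A atTop (𝓝 1)) :
    Tendsto (metricT w A) atTop (𝓝 1) := by
  have := (tendsto_integral_Ioi_zero (f := fun s => 2 * deriv w s ^ 2 / s) (μ := volume)
    tendsto_id).rexp.div hA.sqrt (by simp)
  rwa [Real.exp_zero, Real.sqrt_one, div_one] at this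

theorem tendsto_deriv_metricT_nhdsGT_zero (h : IsBMSolutionOn w A (Ioi 0))
    (hreg : RegularAtOrigin w A)
    (horbit : ∀ s, 0 < s → 0 < A s ∧ -1 < w s ∧ w s < 1 ∧ deriv w s < 0)
    (hint : IntegrableOn (fun s => 2 * deriv w s ^ 2 / s) (Ioi 0)) :
    Tendsto (deriv (metricT w A)) (𝓝[>] 0) (𝓝 0) := by
  have hT := ((hint.continuousWithinAt_Ici_primitive_Ioi.mono
    Ioi_subset_Ici_self).tendsto.rexp).div hreg.2.2.sqrt (by simp)
  have := hT.mul ((((h.tendsto_sq_deriv_div_nhdsGT_zero hreg horbit).const_mul 2).neg).sub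
    ((h.tendsto_deriv_A_nhdsGT_zero hreg horbit).div (hreg.2.2.const_mul 2) (by norm_num)))
  simp only [mul_zero, neg_zero, zero_div, sub_zero] at this
  refine this.congr' ?_
  filter_upwards [self_mem_nhdsWithin] with r (hr : 0 < r)
  rw [(hasDerivAt_metricT h hint (horbit r hr).1 hr).deriv, mul_div_assoc]
  rfl

end metricT

/-- **Solving (2c) for `T` and asymptotic flatness.** If `(w, A)` solves
(2a)–(2b) on `(0, ∞)` with the regularity conditions, `A > 0`, `-1 < w < 1`,
`w' < 0` on `(0, ∞)`, and `w → -1`, `w' → 0`, `A → 1` as `r → ∞`, then there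
is a positive C¹ function `T` on `(0, ∞)` solving
(2c) `2rAT' + (2w'²A + Φ/r)T = 0`, with `T → 1` as `r → ∞` and `T' → 0` as
`r → 0⁺`; in particular `(A, T) → (1, 1)` as `r → ∞`. -/
theorem stmt10 (w A : ℝ → ℝ)
    (hsol : IsBMSolutionOn w A (Ioi 0))
    (hreg : RegularAtOrigin w A)
    (horbit : ∀ r : ℝ, 0 < r → 0 < A r ∧ -1 < w r ∧ w r < 1 ∧ deriv w r < 0)
    (hw : Tendsto w atTop (𝓝 (-1)))
    (hw' : Tendsto (deriv w) atTop (𝓝 0))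
    (hA : Tendsto A atTop (𝓝 1)) :
    ∃ T : ℝ → ℝ,
      (∀ r : ℝ, 0 < r → 0 < T r) ∧
      ContDiffOn ℝ 1 T (Ioi 0) ∧
      (∀ r ∈ Ioi (0 : ℝ),
        2 * r * A r * deriv T r
          + (2 * (deriv w r) ^ 2 * A r + Phi w A r / r) * T r = 0) ∧
      Tendsto T atTop (𝓝 1) ∧
      Tendsto (deriv T) (𝓝[>] (0 : ℝ)) (𝓝 0) ∧
      Tendsto A atTop (𝓝 1) := by
  have hApos : ∀ r, 0 < r → 0 < A r := fun r hr => (horbit r hr).1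
  have hint := hsol.integrableOn_two_mul_sq_deriv_div hreg horbit hw hw'
  exact ⟨metricT w A, fun r hr => metricT_pos (hApos r hr), contDiffOn_metricT hsol hint hApos,
    fun r hr => metricT_ode hsol hint (hApos r hr) hr, tendsto_metricT_atTop hA,
    tendsto_deriv_metricT_nhdsGT_zero hsol hreg horbit hint, hA⟩
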